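/- arXiv:2311.16647 — 5 statements merged into one kernel-verified Lean document; each statement's English description precedes it below -/
import Mathlib

section
/- With the group law on ℝ^5 as above and γ₁=(1,0,0,0,0), γ₂=(0,1,0,0,0), for all integers k,l the product γ₁^k·γ₂^l equals (k, l, kl/2, k²l/12, −kl²/12). -/
/-! Every bracket term of `bch` vanishes on a line `ℝ • x`, so the powers of `x` are its real
multiples `k • x`, and the formula is a single evaluation of `bch (k • γ₁) (l • γ₂)`. -/

/-- The BCH product on `ℝ^5`. -/
noncomputable def bch (x y : Fin 5 → ℝ) : Fin 5 → ℝ :=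
  ![x 0 + y 0,
    x 1 + y 1,
    x 2 + y 2 + (x 0 * y 1 - x 1 * y 0) / 2,
    x 3 + y 3 + (x 0 * y 2 - x 2 * y 0) / 2 + (x 0 - y 0) * (x 0 * y 1 - x 1 * y 0) / 12,
    x 4 + y 4 + (x 1 * y 2 - x 2 * y 1) / 2 + (x 1 - y 1) * (x 0 * y 1 - x 1 * y 0) / 12]

/-- Iterated BCH product: natural powers. -/
noncomputable def bchPow (x : Fin 5 → ℝ) : ℕ → (Fin 5 → ℝ)
  | 0 => 0
  | n + 1 => bch (bchPow x n) x

/-- Integer powers for the BCH product; inverses are componentwise negation. -/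
noncomputable def bchZPow (x : Fin 5 → ℝ) : ℤ → (Fin 5 → ℝ)
  | Int.ofNat n => bchPow x n
  | Int.negSucc n => -(bchPow x (n + 1))

theorem bch_smul_smul (x : Fin 5 → ℝ) (s t : ℝ) : bch (s • x) (t • x) = (s + t) • x := by
  ext i
  fin_cases i <;> simp [bch] <;> ring

theorem bchPow_eq_smul (x : Fin 5 → ℝ) (n : ℕ) : bchPow x n = (n : ℝ) • x := by
  induction n with
  | zero => simp [bchPow]
  | succ n ih =>
    calc bchPow x (n + 1) = bch ((n : ℝ) • x) ((1 : ℝ) • x) := by rw [bchPow, ih, one_smul]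
      _ = ((n + 1 : ℕ) : ℝ) • x := by rw [bch_smul_smul]; push_cast; rfl

theorem bchZPow_eq_smul (x : Fin 5 → ℝ) (k : ℤ) : bchZPow x k = (k : ℝ) • x := by
  cases k with
  | ofNat n => simp [bchZPow, bchPow_eq_smul]
  | negSucc n => rw [bchZPow, bchPow_eq_smul, Int.cast_negSucc, neg_smul]

/-- For `γ₁ = (1,0,0,0,0)` and `γ₂ = (0,1,0,0,0)` and all integers `k, l`, the
product `γ₁^k · γ₂^l` equals `(k, l, kl/2, k²l/12, −kl²/12)`. -/
theorem bch_pow_formula (k l : ℤ) :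
    bch (bchZPow ![1, 0, 0, 0, 0] k) (bchZPow ![0, 1, 0, 0, 0] l) =
      ![(k : ℝ), (l : ℝ), (k : ℝ) * l / 2, (k : ℝ) ^ 2 * l / 12,
        -((k : ℝ) * (l : ℝ) ^ 2) / 12] := by
  rw [bchZPow_eq_smul, bchZPow_eq_smul]
  ext i
  fin_cases i <;> simp [bch] <;> ring
end

section
/- Let r ≥ 1 be a natural number and u,v,e,f,g,h rationals. The set Λ of x ∈ ℝ^5 with x₁,x₂ ∈ ℤ, x₃ − x₁x₂/2 ∈ (1/r)ℤ, and (x₄ − x₁²x₂/12 − ((x₁+u)/2)(x₃−x₁x₂/2), x₅ + x₁x₂²/12 + ((x₂−v)/2)(x₃−x₁x₂/2)) ∈ Γ'', where Γ'' is the subgroup of ℝ² generated by (1/r,0), (0,1/r), ((u−1)/2,(v−1)/2), (e,f), (g,h), is a subgroup of ℝ^5 under the BCH multiplication. -/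
/-- The subgroup `Γ''` of `ℝ²` generated by `(1/r,0)`, `(0,1/r)`, `((u−1)/2,(v−1)/2)`,
`(e,f)`, `(g,h)`. -/
noncomputable def GammaPP (r : ℕ) (u v e f g h : ℚ) : AddSubgroup (ℝ × ℝ) :=
  AddSubgroup.closure
    {(1 / (r : ℝ), 0), (0, 1 / (r : ℝ)), (((u : ℝ) - 1) / 2, ((v : ℝ) - 1) / 2),
      ((e : ℝ), (f : ℝ)), ((g : ℝ), (h : ℝ))}

/-- The explicit lattice `Λ` described by the congruence conditions. -/
noncomputable def Lambda (r : ℕ) (u v e f g h : ℚ) : Set (Fin 5 → ℝ) :=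
  {x | (∃ n : ℤ, x 0 = n) ∧ (∃ n : ℤ, x 1 = n) ∧
    (∃ n : ℤ, x 2 - x 0 * x 1 / 2 = n / (r : ℝ)) ∧
    (x 3 - x 0 ^ 2 * x 1 / 12 - ((x 0 + (u : ℝ)) / 2) * (x 2 - x 0 * x 1 / 2),
      x 4 + x 0 * x 1 ^ 2 / 12 + ((x 1 - (v : ℝ)) / 2) * (x 2 - x 0 * x 1 / 2)) ∈
      GammaPP r u v e f g h}

open AddSubgroup

section
variable {K : Type*} [Field K] [CharZero K] {r : ℕ}

lemma intCast_mem_zmultiples_one_div (hr : r ≠ 0) (n : ℤ) :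
    (n : K) ∈ zmultiples (1 / (r : K)) := by
  convert intCast_mul_mem_zmultiples (1 / (r : K)) (n * r) using 1
  push_cast
  field_simp

lemma mul_add_one_div_two_mem_zmultiples (hr : r ≠ 0) (n : ℤ) :
    (n : K) * (n + 1) / 2 ∈ zmultiples (1 / (r : K)) := by
  obtain ⟨m, hm⟩ := Int.even_mul_succ_self n
  have hm' : (n : K) * (n + 1) / 2 = m := by
    have := congrArg (Int.cast : ℤ → K) hm
    push_cast at this
    rw [this]
    ring
  exact hm' ▸ intCast_mem_zmultiples_one_div hr m

end

lemma intCast_mul_mem {R : Type*} [Ring R] {H : AddSubgroup R} (n : ℤ) {q : R} (hq : q ∈ H) :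
    (n : R) * q ∈ H := by
  simpa only [zsmul_eq_mul] using zsmul_mem hq n

section
variable {r : ℕ} {u v e f g h : ℚ}

lemma mk_mem_gammaPP {s t : ℝ} (hs : s ∈ zmultiples (1 / (r : ℝ)))
    (ht : t ∈ zmultiples (1 / (r : ℝ))) : (s, t) ∈ GammaPP r u v e f g h := by
  obtain ⟨k, rfl⟩ := mem_zmultiples_iff.mp hs
  obtain ⟨l, rfl⟩ := mem_zmultiples_iff.mp ht
  have h₁ : ((1 / (r : ℝ), 0) : ℝ × ℝ) ∈ GammaPP r u v e f g h := subset_closure (by simp)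
  have h₂ : ((0, 1 / (r : ℝ)) : ℝ × ℝ) ∈ GammaPP r u v e f g h := subset_closure (by simp)
  convert add_mem (zsmul_mem h₁ k) (zsmul_mem h₂ l) using 1
  ext <;> simp

lemma intCast_smul_mem_gammaPP (n : ℤ) :
    (n : ℝ) • ((((u : ℝ) - 1) / 2, ((v : ℝ) - 1) / 2) : ℝ × ℝ) ∈ GammaPP r u v e f g h := by
  rw [Int.cast_smul_eq_zsmul]
  exact zsmul_mem (subset_closure (by simp)) n

end

noncomputable def twist (x : Fin 5 → ℝ) : ℝ := x 2 - x 0 * x 1 / 2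

noncomputable def lambdaPair (u v : ℚ) (x : Fin 5 → ℝ) : ℝ × ℝ :=
  (x 3 - x 0 ^ 2 * x 1 / 12 - ((x 0 + u) / 2) * twist x,
    x 4 + x 0 * x 1 ^ 2 / 12 + ((x 1 - v) / 2) * twist x)

section
variable (u v : ℚ) (x y : Fin 5 → ℝ)

lemma twist_bch : twist (bch x y) = twist x + twist y - x 1 * y 0 := by
  simp only [twist, bch, Matrix.cons_val, Matrix.cons_val_zero, Matrix.cons_val_one]
  ring

lemma twist_neg : twist (-x) = -twist x - x 0 * x 1 := by
  simp only [twist, Pi.neg_apply]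
  ring

lemma lambdaPair_bch :
    lambdaPair u v (bch x y) = lambdaPair u v x + lambdaPair u v y +
      ((x 1 * (y 0 * (y 0 + 1) / 2) - y 0 * twist x,
          x 1 * twist y - y 0 * ((x 1 - 1) * x 1 / 2)) +
        (x 1 * y 0) • (((u : ℝ) - 1) / 2, ((v : ℝ) - 1) / 2)) := by
  ext <;> simp only [lambdaPair, twist, bch, Matrix.cons_val, Matrix.cons_val_zero,
    Matrix.cons_val_one, Prod.fst_add, Prod.snd_add, Prod.smul_fst, Prod.smul_snd, smul_eq_mul] <;>
    ring

lemma lambdaPair_neg :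
    lambdaPair u v (-x) = -lambdaPair u v x +
      ((-(x 1 * ((x 0 - 1) * x 0 / 2)) - x 0 * twist x,
          x 0 * (x 1 * (x 1 + 1) / 2) + x 1 * twist x) +
        (x 0 * x 1) • (((u : ℝ) - 1) / 2, ((v : ℝ) - 1) / 2)) := by
  ext <;> simp only [lambdaPair, twist, Pi.neg_apply, Prod.fst_add, Prod.snd_add, Prod.fst_neg,
    Prod.snd_neg, Prod.smul_fst, Prod.smul_snd, smul_eq_mul] <;> ring

end

section
variable {r : ℕ} {u v e f g h : ℚ}

lemma mem_lambda_iff {x : Fin 5 → ℝ} :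
    x ∈ Lambda r u v e f g h ↔ (∃ n : ℤ, x 0 = n) ∧ (∃ n : ℤ, x 1 = n) ∧
      twist x ∈ zmultiples (1 / (r : ℝ)) ∧ lambdaPair u v x ∈ GammaPP r u v e f g h := by
  simp only [mem_zmultiples_iff, zsmul_eq_mul, mul_one_div, eq_comm (b := twist x)]
  rfl

lemma zero_mem_lambda : (0 : Fin 5 → ℝ) ∈ Lambda r u v e f g h := by
  refine mem_lambda_iff.mpr ⟨⟨0, by simp⟩, ⟨0, by simp⟩, ?_, ?_⟩
  · simp [twist]
  · simp [lambdaPair, twist, Prod.mk_zero_zero]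

lemma bch_mem_lambda (hr : r ≠ 0) {x y : Fin 5 → ℝ} (hx : x ∈ Lambda r u v e f g h)
    (hy : y ∈ Lambda r u v e f g h) : bch x y ∈ Lambda r u v e f g h := by
  obtain ⟨⟨a, ha⟩, ⟨b, hb⟩, hcx, hpx⟩ := mem_lambda_iff.mp hx
  obtain ⟨⟨a', ha'⟩, ⟨b', hb'⟩, hcy, hpy⟩ := mem_lambda_iff.mp hy
  refine mem_lambda_iff.mpr ⟨⟨a + a', by simp [bch, ha, ha']⟩, ⟨b + b', by simp [bch, hb, hb']⟩,
    ?_, ?_⟩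
  · rw [twist_bch, hb, ha']
    exact sub_mem (add_mem hcx hcy) (by exact_mod_cast intCast_mem_zmultiples_one_div hr (b * a'))
  · have hb₂ := mul_add_one_div_two_mem_zmultiples (K := ℝ) hr (b - 1)
    push_cast at hb₂
    rw [sub_add_cancel] at hb₂
    rw [lambdaPair_bch, hb, ha', ← Int.cast_mul]
    refine add_mem (add_mem hpx hpy) (add_mem (mk_mem_gammaPP ?_ ?_)
      (intCast_smul_mem_gammaPP _))
    · exact sub_mem (intCast_mul_mem b (mul_add_one_div_two_mem_zmultiples hr a'))
        (intCast_mul_mem a' hcx)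
    · exact sub_mem (intCast_mul_mem b hcy) (intCast_mul_mem a' hb₂)

lemma neg_mem_lambda (hr : r ≠ 0) {x : Fin 5 → ℝ} (hx : x ∈ Lambda r u v e f g h) :
    -x ∈ Lambda r u v e f g h := by
  obtain ⟨⟨a, ha⟩, ⟨b, hb⟩, hc, hp⟩ := mem_lambda_iff.mp hx
  refine mem_lambda_iff.mpr ⟨⟨-a, by simp [ha]⟩, ⟨-b, by simp [hb]⟩, ?_, ?_⟩
  · rw [twist_neg, ha, hb]
    exact sub_mem (neg_mem hc) (by exact_mod_cast intCast_mem_zmultiples_one_div hr (a * b))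
  · have ha₂ := mul_add_one_div_two_mem_zmultiples (K := ℝ) hr (a - 1)
    push_cast at ha₂
    rw [sub_add_cancel] at ha₂
    rw [lambdaPair_neg, ha, hb, ← Int.cast_mul]
    refine add_mem (neg_mem hp) (add_mem (mk_mem_gammaPP ?_ ?_)
      (intCast_smul_mem_gammaPP _))
    · exact sub_mem (neg_mem (intCast_mul_mem b ha₂)) (intCast_mul_mem a hc)
    · exact add_mem (intCast_mul_mem a (mul_add_one_div_two_mem_zmultiples hr b))
        (intCast_mul_mem b hc)

end

/-- `Λ` is a subgroup of `ℝ^5` for the BCH multiplication: it contains the identity,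
and is closed under multiplication and inversion (componentwise negation). -/
theorem lambda_subgroup (r : ℕ) (hr : 1 ≤ r) (u v e f g h : ℚ) :
    (0 : Fin 5 → ℝ) ∈ Lambda r u v e f g h ∧
    (∀ x y, x ∈ Lambda r u v e f g h → y ∈ Lambda r u v e f g h →
      bch x y ∈ Lambda r u v e f g h) ∧
    (∀ x, x ∈ Lambda r u v e f g h → -x ∈ Lambda r u v e f g h) :=
  ⟨zero_mem_lambda, fun _ _ => bch_mem_lambda (by omega), fun _ => neg_mem_lambda (by omega)⟩
end

section
/- Let Γ be the subgroup of (ℝ^5, BCH product) generated by γ₁=(1,0,0,0,0), γ₂=(0,1,0,0,0), γ₃=(0,0,1/r,u/2r,v/2r), γ₄=(0,0,0,e,f), γ₅=(0,0,0,g,h), where r ∈ ℕ, r ≥ 1 and u,v,e,f,g,h ∈ ℚ. Then Γ equals the set of x ∈ ℝ^5 with x₁,x₂ ∈ ℤ, x₃ − x₁x₂/2 ∈ (1/r)ℤ, and (x₄ − x₁²x₂/12 − ((x₁+u)/2)(x₃−x₁x₂/2), x₅ + x₁x₂²/12 + ((x₂−v)/2)(x₃−x₁x₂/2)) ∈ Γ'',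 where Γ'' ⊂ ℝ² is the subgroup generated by (1/r,0), (0,1/r), ((u−1)/2,(v−1)/2), (e,f), (g,h). -/
theorem bch_assoc (x y z : Fin 5 → ℝ) : bch (bch x y) z = bch x (bch y z) := by
  funext i; fin_cases i <;> simp [bch] <;> ring

theorem bch_zero_left (x : Fin 5 → ℝ) : bch 0 x = x := by
  funext i; fin_cases i <;> simp [bch]

theorem bch_zero_right (x : Fin 5 → ℝ) : bch x 0 = x := by
  funext i; fin_cases i <;> simp [bch]

theorem bch_neg_left (x : Fin 5 → ℝ) : bch (-x) x = 0 := by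
  funext i; fin_cases i <;> simp [bch] <;> ring

/-- `ℝ^5` regarded as a group via the BCH product. -/
structure G5 where
  val : Fin 5 → ℝ

noncomputable instance : Group G5 where
  mul x y := ⟨bch x.val y.val⟩
  one := ⟨0⟩
  inv x := ⟨-x.val⟩
  mul_assoc a b c := congrArg G5.mk (bch_assoc a.val b.val c.val)
  one_mul a := congrArg G5.mk (bch_zero_left a.val)
  mul_one a := congrArg G5.mk (bch_zero_right a.val)
  inv_mul_cancel a := congrArg G5.mk (bch_neg_left a.val)

namespace GammaAux

@[simp] lemma val_mk (x : Fin 5 → ℝ) : (G5.mk x).val = x := rfl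
@[simp] lemma val_mul (x y : G5) : (x * y).val = bch x.val y.val := rfl
@[simp] lemma val_inv (x : G5) : (x⁻¹).val = -x.val := rfl
@[simp] lemma val_one' : (1 : G5).val = 0 := rfl

lemma mk_eq {x y : Fin 5 → ℝ} (hh : ∀ i, x i = y i) : G5.mk x = G5.mk y :=
  congrArg G5.mk (funext hh)

variable (r : ℕ) (u v e f g h : ℚ)

noncomputable def Gam : Subgroup G5 :=
  Subgroup.closure
        {G5.mk ![1, 0, 0, 0, 0], G5.mk ![0, 1, 0, 0, 0],
         G5.mk ![0, 0, 1 / (r : ℝ), (u : ℝ) / (2 * r), (v : ℝ) / (2 * r)],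
         G5.mk ![0, 0, 0, (e : ℝ), (f : ℝ)],
         G5.mk ![0, 0, 0, (g : ℝ), (h : ℝ)]}

def SS : Set G5 :=
  {x : G5 |
        (∃ n : ℤ, x.val 0 = n) ∧ (∃ n : ℤ, x.val 1 = n) ∧
        (∃ n : ℤ, x.val 2 - x.val 0 * x.val 1 / 2 = n / (r : ℝ)) ∧
        (x.val 3 - x.val 0 ^ 2 * x.val 1 / 12 -
            ((x.val 0 + (u : ℝ)) / 2) * (x.val 2 - x.val 0 * x.val 1 / 2),
          x.val 4 + x.val 0 * x.val 1 ^ 2 / 12 +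
            ((x.val 1 - (v : ℝ)) / 2) * (x.val 2 - x.val 0 * x.val 1 / 2)) ∈
          GammaPP r u v e f g h}

lemma mem1 : G5.mk ![1, 0, 0, 0, 0] ∈ Gam r u v e f g h :=
  Subgroup.subset_closure (Set.mem_insert _ _)
lemma mem2 : G5.mk ![0, 1, 0, 0, 0] ∈ Gam r u v e f g h :=
  Subgroup.subset_closure (Set.mem_insert_of_mem _ (Set.mem_insert _ _))
lemma mem3 : G5.mk ![0, 0, 1 / (r : ℝ), (u : ℝ) / (2 * r), (v : ℝ) / (2 * r)] ∈ Gam r u v e f g h :=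
  Subgroup.subset_closure (Set.mem_insert_of_mem _ (Set.mem_insert_of_mem _ (Set.mem_insert _ _)))
lemma mem4 : G5.mk ![0, 0, 0, (e : ℝ), (f : ℝ)] ∈ Gam r u v e f g h :=
  Subgroup.subset_closure (Set.mem_insert_of_mem _ (Set.mem_insert_of_mem _
    (Set.mem_insert_of_mem _ (Set.mem_insert _ _))))
lemma mem5 : G5.mk ![0, 0, 0, (g : ℝ), (h : ℝ)] ∈ Gam r u v e f g h :=
  Subgroup.subset_closure (Set.mem_insert_of_mem _ (Set.mem_insert_of_mem _
    (Set.mem_insert_of_mem _ (Set.mem_insert_of_mem _ rfl))))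

lemma gp1 : ((1 / (r : ℝ), (0:ℝ))) ∈ GammaPP r u v e f g h :=
  AddSubgroup.subset_closure (Set.mem_insert _ _)
lemma gp2 : (((0:ℝ), 1 / (r : ℝ))) ∈ GammaPP r u v e f g h :=
  AddSubgroup.subset_closure (Set.mem_insert_of_mem _ (Set.mem_insert _ _))
lemma gp3 : ((((u : ℝ) - 1) / 2, ((v : ℝ) - 1) / 2)) ∈ GammaPP r u v e f g h :=
  AddSubgroup.subset_closure (Set.mem_insert_of_mem _ (Set.mem_insert_of_mem _ (Set.mem_insert _ _)))
lemma gp4 : (((e : ℝ), (f : ℝ))) ∈ GammaPP r u v e f g h :=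
  AddSubgroup.subset_closure (Set.mem_insert_of_mem _ (Set.mem_insert_of_mem _
    (Set.mem_insert_of_mem _ (Set.mem_insert _ _))))
lemma gp5 : (((g : ℝ), (h : ℝ))) ∈ GammaPP r u v e f g h :=
  AddSubgroup.subset_closure (Set.mem_insert_of_mem _ (Set.mem_insert_of_mem _
    (Set.mem_insert_of_mem _ (Set.mem_insert_of_mem _ rfl))))

lemma memA (n : ℤ) : G5.mk ![(n : ℝ), 0, 0, 0, 0] ∈ Gam r u v e f g h := by
  induction n using Int.induction_on with
  | zero =>
    rw [show G5.mk ![((0:ℤ) : ℝ), 0, 0, 0, 0] = 1 from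
      mk_eq (by intro i; fin_cases i <;> simp)]
    exact one_mem _
  | succ n ih =>
    rw [show G5.mk ![((n + 1 : ℤ) : ℝ), 0, 0, 0, 0]
        = G5.mk ![((n : ℤ) : ℝ), 0, 0, 0, 0] * G5.mk ![1, 0, 0, 0, 0] from
      mk_eq (by intro i; fin_cases i <;> simp [bch] <;> push_cast <;> ring)]
    exact mul_mem ih (mem1 r u v e f g h)
  | pred n ih =>
    rw [show G5.mk ![((-n - 1 : ℤ) : ℝ), 0, 0, 0, 0]
        = G5.mk ![((-n : ℤ) : ℝ), 0, 0, 0, 0] * (G5.mk ![1, 0, 0, 0, 0])⁻¹ from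
      mk_eq (by intro i; fin_cases i <;> simp [bch] <;> push_cast <;> ring)]
    exact mul_mem ih (inv_mem (mem1 r u v e f g h))

lemma memB (n : ℤ) : G5.mk ![0, (n : ℝ), 0, 0, 0] ∈ Gam r u v e f g h := by
  induction n using Int.induction_on with
  | zero =>
    rw [show G5.mk ![0, ((0:ℤ) : ℝ), 0, 0, 0] = 1 from
      mk_eq (by intro i; fin_cases i <;> simp)]
    exact one_mem _
  | succ n ih =>
    rw [show G5.mk ![0, ((n + 1 : ℤ) : ℝ), 0, 0, 0]
        = G5.mk ![0, ((n : ℤ) : ℝ), 0, 0, 0] * G5.mk ![0, 1, 0, 0, 0] from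
      mk_eq (by intro i; fin_cases i <;> simp [bch] <;> push_cast <;> ring)]
    exact mul_mem ih (mem2 r u v e f g h)
  | pred n ih =>
    rw [show G5.mk ![0, ((-n - 1 : ℤ) : ℝ), 0, 0, 0]
        = G5.mk ![0, ((-n : ℤ) : ℝ), 0, 0, 0] * (G5.mk ![0, 1, 0, 0, 0])⁻¹ from
      mk_eq (by intro i; fin_cases i <;> simp [bch] <;> push_cast <;> ring)]
    exact mul_mem ih (inv_mem (mem2 r u v e f g h))

lemma memC (n : ℤ) :
    G5.mk ![0, 0, (n : ℝ) / r, (n : ℝ) * u / (2 * r), (n : ℝ) * v / (2 * r)]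
      ∈ Gam r u v e f g h := by
  induction n using Int.induction_on with
  | zero =>
    rw [show G5.mk ![0, 0, ((0:ℤ) : ℝ) / r, ((0:ℤ) : ℝ) * u / (2 * r), ((0:ℤ) : ℝ) * v / (2 * r)]
        = 1 from mk_eq (by intro i; fin_cases i <;> simp)]
    exact one_mem _
  | succ n ih =>
    rw [show G5.mk ![0, 0, ((n + 1 : ℤ) : ℝ) / r, ((n + 1 : ℤ) : ℝ) * u / (2 * r),
          ((n + 1 : ℤ) : ℝ) * v / (2 * r)]
        = G5.mk ![0, 0, ((n : ℤ) : ℝ) / r, ((n : ℤ) : ℝ) * u / (2 * r), ((n : ℤ) : ℝ) * v / (2 * r)]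
          * G5.mk ![0, 0, 1 / (r : ℝ), (u : ℝ) / (2 * r), (v : ℝ) / (2 * r)] from
      mk_eq (by intro i; fin_cases i <;> simp [bch] <;> push_cast <;> ring)]
    exact mul_mem ih (mem3 r u v e f g h)
  | pred n ih =>
    rw [show G5.mk ![0, 0, ((-n - 1 : ℤ) : ℝ) / r, ((-n - 1 : ℤ) : ℝ) * u / (2 * r),
          ((-n - 1 : ℤ) : ℝ) * v / (2 * r)]
        = G5.mk ![0, 0, ((-n : ℤ) : ℝ) / r, ((-n : ℤ) : ℝ) * u / (2 * r), ((-n : ℤ) : ℝ) * v / (2 * r)]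
          * (G5.mk ![0, 0, 1 / (r : ℝ), (u : ℝ) / (2 * r), (v : ℝ) / (2 * r)])⁻¹ from
      mk_eq (by intro i; fin_cases i <;> simp [bch] <;> push_cast <;> ring)]
    exact mul_mem ih (inv_mem (mem3 r u v e f g h))

set_option maxHeartbeats 1600000 in
lemma memN (hr : 1 ≤ r) :
    ∀ pq : ℝ × ℝ, pq ∈ GammaPP r u v e f g h →
      G5.mk ![0, 0, 0, pq.1, pq.2] ∈ Gam r u v e f g h := by
  have hr0 : (r : ℝ) ≠ 0 := Nat.cast_ne_zero.mpr (by omega)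
  intro pq hpq
  rw [GammaPP] at hpq
  induction hpq using AddSubgroup.closure_induction with
  | mem z hz =>
    simp only [Set.mem_insert_iff, Set.mem_singleton_iff] at hz
    rcases hz with rfl | rfl | rfl | rfl | rfl
    · have key : (G5.mk ![1, 0, 0, 0, 0]
            * G5.mk ![0, 0, 1 / (r : ℝ), (u : ℝ) / (2 * r), (v : ℝ) / (2 * r)])
          * ((G5.mk ![1, 0, 0, 0, 0])⁻¹
            * (G5.mk ![0, 0, 1 / (r : ℝ), (u : ℝ) / (2 * r), (v : ℝ) / (2 * r)])⁻¹)
          = G5.mk ![0, 0, 0, (1 / (r:ℝ), (0:ℝ)).1, (1 / (r:ℝ), (0:ℝ)).2] :=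
        mk_eq (by intro i; fin_cases i <;> simp [bch] <;> ring)
      rw [← key]
      exact mul_mem (mul_mem (mem1 r u v e f g h) (mem3 r u v e f g h))
        (mul_mem (inv_mem (mem1 r u v e f g h)) (inv_mem (mem3 r u v e f g h)))
    · have key : (G5.mk ![0, 1, 0, 0, 0]
            * G5.mk ![0, 0, 1 / (r : ℝ), (u : ℝ) / (2 * r), (v : ℝ) / (2 * r)])
          * ((G5.mk ![0, 1, 0, 0, 0])⁻¹
            * (G5.mk ![0, 0, 1 / (r : ℝ), (u : ℝ) / (2 * r), (v : ℝ) / (2 * r)])⁻¹)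
          = G5.mk ![0, 0, 0, ((0:ℝ), 1 / (r:ℝ)).1, ((0:ℝ), 1 / (r:ℝ)).2] :=
        mk_eq (by intro i; fin_cases i <;> simp [bch] <;> ring)
      rw [← key]
      exact mul_mem (mul_mem (mem2 r u v e f g h) (mem3 r u v e f g h))
        (mul_mem (inv_mem (mem2 r u v e f g h)) (inv_mem (mem3 r u v e f g h)))
    · -- ((u-1)/2, (v-1)/2) = γ₃^r * [γ₁,γ₂]⁻¹
      have key : G5.mk ![0, 0, ((r : ℤ) : ℝ) / r, ((r : ℤ) : ℝ) * u / (2 * r),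
            ((r : ℤ) : ℝ) * v / (2 * r)]
          * ((G5.mk ![1, 0, 0, 0, 0] * G5.mk ![0, 1, 0, 0, 0])
            * ((G5.mk ![1, 0, 0, 0, 0])⁻¹ * (G5.mk ![0, 1, 0, 0, 0])⁻¹))⁻¹
          = G5.mk ![0, 0, 0, (((u:ℝ) - 1) / 2, ((v:ℝ) - 1) / 2).1,
              (((u:ℝ) - 1) / 2, ((v:ℝ) - 1) / 2).2] :=
        mk_eq (by
          intro i; fin_cases i <;> simp [bch] <;> push_cast <;>
            (try field_simp) <;> ring)
      rw [← key]
      exact mul_mem (memC r u v e f g h (r : ℤ))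
        (inv_mem (mul_mem (mul_mem (mem1 r u v e f g h) (mem2 r u v e f g h))
          (mul_mem (inv_mem (mem1 r u v e f g h)) (inv_mem (mem2 r u v e f g h)))))
    · exact mem4 r u v e f g h
    · exact mem5 r u v e f g h
  | zero =>
    rw [show G5.mk ![0, 0, 0, ((0 : ℝ × ℝ)).1, ((0 : ℝ × ℝ)).2] = 1 from
      mk_eq (by intro i; fin_cases i <;> simp)]
    exact one_mem _
  | add z w hz hw ihz ihw =>
    rw [show G5.mk ![0, 0, 0, (z + w).1, (z + w).2]
        = G5.mk ![0, 0, 0, z.1, z.2] * G5.mk ![0, 0, 0, w.1, w.2] from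
      mk_eq (by intro i; fin_cases i <;> simp [bch])]
    exact mul_mem ihz ihw
  | neg z hz ihz =>
    rw [show G5.mk ![0, 0, 0, (-z).1, (-z).2] = (G5.mk ![0, 0, 0, z.1, z.2])⁻¹ from
      mk_eq (by intro i; fin_cases i <;> simp)]
    exact inv_mem ihz

lemma S_one : (1 : G5) ∈ SS r u v e f g h := by
  have hval : (1 : G5).val = 0 := rfl
  refine ⟨⟨0, by rw [hval]; norm_num⟩, ⟨0, by rw [hval]; norm_num⟩,
    ⟨0, by rw [hval]; norm_num⟩, ?_⟩
  convert zero_mem (GammaPP r u v e f g h) using 1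
  refine Prod.ext ?_ ?_ <;> rw [hval] <;> norm_num

set_option maxHeartbeats 1600000 in
lemma S_mul (hr : 1 ≤ r) {x y : G5} (hx : x ∈ SS r u v e f g h)
    (hy : y ∈ SS r u v e f g h) : x * y ∈ SS r u v e f g h := by
  have hr0 : (r : ℝ) ≠ 0 := Nat.cast_ne_zero.mpr (by omega)
  obtain ⟨⟨a, ha⟩, ⟨b, hb⟩, ⟨c, hc⟩, hP⟩ := hx
  obtain ⟨⟨A, hA⟩, ⟨B, hB⟩, ⟨C, hC⟩, hQ⟩ := hy
  have hval : (x * y).val = bch x.val y.val := rfl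
  have h0 : (x * y).val 0 = x.val 0 + y.val 0 := by rw [hval]; simp [bch]
  have h1 : (x * y).val 1 = x.val 1 + y.val 1 := by rw [hval]; simp [bch]
  have h2 : (x * y).val 2 = x.val 2 + y.val 2
      + (x.val 0 * y.val 1 - x.val 1 * y.val 0) / 2 := by rw [hval]; simp [bch]
  have h3 : (x * y).val 3 = x.val 3 + y.val 3
      + (x.val 0 * y.val 2 - x.val 2 * y.val 0) / 2
      + (x.val 0 - y.val 0) * (x.val 0 * y.val 1 - x.val 1 * y.val 0) / 12 := by
    rw [hval]; simp [bch]
  have h4 : (x * y).val 4 = x.val 4 + y.val 4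
      + (x.val 1 * y.val 2 - x.val 2 * y.val 1) / 2
      + (x.val 1 - y.val 1) * (x.val 0 * y.val 1 - x.val 1 * y.val 0) / 12 := by
    rw [hval]; simp [bch]
  have hx2 : x.val 2 = (c : ℝ) / r + (a : ℝ) * (b : ℝ) / 2 := by
    rw [ha, hb] at hc; linarith
  have hy2 : y.val 2 = (C : ℝ) / r + (A : ℝ) * (B : ℝ) / 2 := by
    rw [hA, hB] at hC; linarith
  obtain ⟨k1, hk1⟩ := Int.even_mul_succ_self A
  obtain ⟨k2, hk2⟩ := Int.even_mul_succ_self (b - 1)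
  have ck1 : (k1 : ℝ) = (A : ℝ) * ((A : ℝ) + 1) / 2 := by
    have := congrArg (fun z : ℤ => (z : ℝ)) hk1; push_cast at this; linarith
  have ck2 : (k2 : ℝ) = ((b : ℝ) - 1) * (b : ℝ) / 2 := by
    have := congrArg (fun z : ℤ => (z : ℝ)) hk2; push_cast at this; linarith
  refine ⟨⟨a + A, ?_⟩, ⟨b + B, ?_⟩, ⟨c + C - r * (b * A), ?_⟩, ?_⟩
  · rw [h0, ha, hA]; push_cast; ring
  · rw [h1, hb, hB]; push_cast; ring
  · rw [h2, h0, h1, ha, hA, hb, hB, hx2, hy2]; push_cast; field_simp; ring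
  · convert add_mem (add_mem (add_mem (add_mem hP hQ)
        (zsmul_mem (gp1 r u v e f g h) (-(c * A) + r * (b * k1))))
        (zsmul_mem (gp2 r u v e f g h) (b * C - r * (A * k2))))
        (zsmul_mem (gp3 r u v e f g h) (b * A)) using 1
    refine Prod.ext ?_ ?_
    · simp only [Prod.fst_add, Prod.snd_add, Prod.smul_fst, Prod.smul_snd]
      simp only [zsmul_eq_mul]
      rw [h3, h2, h1, h0, ha, hA, hb, hB, hx2, hy2]; push_cast
      rw [ck1]; field_simp; ring
    · simp only [Prod.fst_add, Prod.snd_add, Prod.smul_fst, Prod.smul_snd]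
      simp only [zsmul_eq_mul]
      rw [h4, h2, h1, h0, ha, hA, hb, hB, hx2, hy2]; push_cast
      rw [ck2]; field_simp; ring

set_option maxHeartbeats 1600000 in
lemma S_inv (hr : 1 ≤ r) {x : G5} (hx : x ∈ SS r u v e f g h) :
    x⁻¹ ∈ SS r u v e f g h := by
  have hr0 : (r : ℝ) ≠ 0 := Nat.cast_ne_zero.mpr (by omega)
  obtain ⟨⟨a, ha⟩, ⟨b, hb⟩, ⟨c, hc⟩, hP⟩ := hx
  have hval : (x⁻¹).val = -x.val := rfl
  have h0 : (x⁻¹).val 0 = -x.val 0 := by rw [hval]; simp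
  have h1 : (x⁻¹).val 1 = -x.val 1 := by rw [hval]; simp
  have h2 : (x⁻¹).val 2 = -x.val 2 := by rw [hval]; simp
  have h3 : (x⁻¹).val 3 = -x.val 3 := by rw [hval]; simp
  have h4 : (x⁻¹).val 4 = -x.val 4 := by rw [hval]; simp
  have hx2 : x.val 2 = (c : ℝ) / r + (a : ℝ) * (b : ℝ) / 2 := by
    rw [ha, hb] at hc; linarith
  obtain ⟨k1, hk1⟩ := Int.even_mul_succ_self (a - 1)
  obtain ⟨k2, hk2⟩ := Int.even_mul_succ_self b
  have ck1 : (k1 : ℝ) = ((a : ℝ) - 1) * (a : ℝ) / 2 := by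
    have := congrArg (fun z : ℤ => (z : ℝ)) hk1; push_cast at this; linarith
  have ck2 : (k2 : ℝ) = (b : ℝ) * ((b : ℝ) + 1) / 2 := by
    have := congrArg (fun z : ℤ => (z : ℝ)) hk2; push_cast at this; linarith
  refine ⟨⟨-a, ?_⟩, ⟨-b, ?_⟩, ⟨-c - r * (a * b), ?_⟩, ?_⟩
  · rw [h0, ha]; push_cast; ring
  · rw [h1, hb]; push_cast; ring
  · rw [h2, h0, h1, ha, hb, hx2]; push_cast; field_simp; ring
  · convert add_mem (add_mem (add_mem (neg_mem hP)
        (zsmul_mem (gp1 r u v e f g h) (-(a * c) - r * (b * k1))))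
        (zsmul_mem (gp2 r u v e f g h) (b * c + r * (a * k2))))
        (zsmul_mem (gp3 r u v e f g h) (a * b)) using 1
    refine Prod.ext ?_ ?_
    · simp only [Prod.fst_add, Prod.snd_add, Prod.fst_neg, Prod.snd_neg,
        Prod.smul_fst, Prod.smul_snd]
      simp only [zsmul_eq_mul]
      rw [h3, h2, h1, h0, ha, hb, hx2]; push_cast
      rw [ck1]; field_simp; ring
    · simp only [Prod.fst_add, Prod.snd_add, Prod.fst_neg, Prod.snd_neg,
        Prod.smul_fst, Prod.smul_snd]
      simp only [zsmul_eq_mul]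
      rw [h4, h2, h1, h0, ha, hb, hx2]; push_cast
      rw [ck2]; field_simp; ring

lemma S_gen (hr : 1 ≤ r) : ∀ z ∈ ({G5.mk ![1, 0, 0, 0, 0], G5.mk ![0, 1, 0, 0, 0],
         G5.mk ![0, 0, 1 / (r : ℝ), (u : ℝ) / (2 * r), (v : ℝ) / (2 * r)],
         G5.mk ![0, 0, 0, (e : ℝ), (f : ℝ)],
         G5.mk ![0, 0, 0, (g : ℝ), (h : ℝ)]} : Set G5), z ∈ SS r u v e f g h := by
  have hr0 : (r : ℝ) ≠ 0 := Nat.cast_ne_zero.mpr (by omega)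
  intro z hz
  simp only [Set.mem_insert_iff, Set.mem_singleton_iff] at hz
  rcases hz with rfl | rfl | rfl | rfl | rfl
  · refine ⟨⟨1, by norm_num⟩, ⟨0, by norm_num⟩, ⟨0, by simp⟩, ?_⟩
    convert zero_mem (GammaPP r u v e f g h) using 1
    refine Prod.ext ?_ ?_ <;> simp
  · refine ⟨⟨0, by norm_num⟩, ⟨1, by norm_num⟩, ⟨0, by simp⟩, ?_⟩
    convert zero_mem (GammaPP r u v e f g h) using 1
    refine Prod.ext ?_ ?_ <;> simp
  · refine ⟨⟨0, by norm_num⟩, ⟨0, by norm_num⟩, ⟨1, by simp⟩, ?_⟩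
    convert zero_mem (GammaPP r u v e f g h) using 1
    refine Prod.ext ?_ ?_ <;> simp <;> field_simp <;> ring
  · refine ⟨⟨0, by norm_num⟩, ⟨0, by norm_num⟩, ⟨0, by simp⟩, ?_⟩
    convert gp4 r u v e f g h using 1
    refine Prod.ext ?_ ?_ <;> simp
  · refine ⟨⟨0, by norm_num⟩, ⟨0, by norm_num⟩, ⟨0, by simp⟩, ?_⟩
    convert gp5 r u v e f g h using 1
    refine Prod.ext ?_ ?_ <;> simp

set_option maxHeartbeats 1600000 in
lemma S_sub (hr : 1 ≤ r) {x : G5} (hx : x ∈ SS r u v e f g h) :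
    x ∈ Gam r u v e f g h := by
  have hr0 : (r : ℝ) ≠ 0 := Nat.cast_ne_zero.mpr (by omega)
  obtain ⟨⟨a, ha⟩, ⟨b, hb⟩, ⟨c, hc⟩, hP⟩ := hx
  have hx2 : x.val 2 = (c : ℝ) / r + (a : ℝ) * (b : ℝ) / 2 := by
    rw [ha, hb] at hc; linarith
  set P := x.val 3 - x.val 0 ^ 2 * x.val 1 / 12 -
      ((x.val 0 + (u : ℝ)) / 2) * (x.val 2 - x.val 0 * x.val 1 / 2) with hPdef
  set Q := x.val 4 + x.val 0 * x.val 1 ^ 2 / 12 +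
      ((x.val 1 - (v : ℝ)) / 2) * (x.val 2 - x.val 0 * x.val 1 / 2) with hQdef
  have hpq : (P, Q - (b : ℝ) * (c : ℝ) / r) ∈ GammaPP r u v e f g h := by
    convert add_mem hP (zsmul_mem (gp2 r u v e f g h) (-(b * c))) using 1
    refine Prod.ext ?_ ?_ <;>
      simp only [Prod.fst_add, Prod.snd_add, Prod.smul_fst, Prod.smul_snd] <;>
      simp only [zsmul_eq_mul] <;> push_cast <;> field_simp <;> try ring
  have key : x = ((G5.mk ![(a : ℝ), 0, 0, 0, 0] * G5.mk ![0, (b : ℝ), 0, 0, 0])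
      * G5.mk ![0, 0, (c : ℝ) / r, (c : ℝ) * u / (2 * r), (c : ℝ) * v / (2 * r)])
      * G5.mk ![0, 0, 0, P, Q - (b : ℝ) * (c : ℝ) / r] := by
    refine mk_eq ?_
    intro i; fin_cases i
    · simp [bch, ha]
    · simp [bch, hb]
    · simp [bch]; rw [hx2]; ring
    · simp [bch]; rw [hPdef, ha, hb, hx2]; field_simp; ring
    · simp [bch]; rw [hQdef, ha, hb, hx2]; field_simp; ring
  rw [key]
  exact mul_mem (mul_mem (mul_mem (memA r u v e f g h a) (memB r u v e f g h b))
    (memC r u v e f g h c)) (memN r u v e f g h hr _ hpq)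

end GammaAux

/-- The subgroup `Γ` of `(ℝ^5, BCH)` generated by `γ₁, …, γ₅` coincides with the
explicitly described lattice. -/
theorem gamma_eq_lattice (r : ℕ) (hr : 1 ≤ r) (u v e f g h : ℚ) :
    ((Subgroup.closure
        {G5.mk ![1, 0, 0, 0, 0], G5.mk ![0, 1, 0, 0, 0],
         G5.mk ![0, 0, 1 / (r : ℝ), (u : ℝ) / (2 * r), (v : ℝ) / (2 * r)],
         G5.mk ![0, 0, 0, (e : ℝ), (f : ℝ)],
         G5.mk ![0, 0, 0, (g : ℝ), (h : ℝ)]} : Subgroup G5) : Set G5) =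
      {x : G5 |
        (∃ n : ℤ, x.val 0 = n) ∧ (∃ n : ℤ, x.val 1 = n) ∧
        (∃ n : ℤ, x.val 2 - x.val 0 * x.val 1 / 2 = n / (r : ℝ)) ∧
        (x.val 3 - x.val 0 ^ 2 * x.val 1 / 12 -
            ((x.val 0 + (u : ℝ)) / 2) * (x.val 2 - x.val 0 * x.val 1 / 2),
          x.val 4 + x.val 0 * x.val 1 ^ 2 / 12 +
            ((x.val 1 - (v : ℝ)) / 2) * (x.val 2 - x.val 0 * x.val 1 / 2)) ∈
          GammaPP r u v e f g h} := by
  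
  ext x
  simp only [SetLike.mem_coe, Set.mem_setOf_eq]
  constructor
  · intro hx
    have : x ∈ GammaAux.SS r u v e f g h := by
      refine Subgroup.closure_induction
        (p := fun z _ => z ∈ GammaAux.SS r u v e f g h)
        (fun z hz => GammaAux.S_gen r u v e f g h hr z hz)
        (GammaAux.S_one r u v e f g h)
        (fun z w _ _ hz hw => GammaAux.S_mul r u v e f g h hr hz hw)
        (fun z _ hz => GammaAux.S_inv r u v e f g h hr hz) hx
    exact this
  · intro hx
    exact GammaAux.S_sub r u v e f g h hr hx
end

section
/- In the group (ℝ^5, BCH product) with generators γ₁=(1,0,0,0,0), γ₂=(0,1,0,0,0), γ₃=(0,0,1/r,u/2r,v/2r): the commutator [γ₁,γ₂]=(0,0,1,1/2,1/2), [γ₁,[γ₁,γ₂]]=(0,0,0,1,0), [γ₂,[γ₁,γ₂]]=(0,0,0,0,1), [γ₁,γ₃]=(0,0,0,1/r,0), [γ₂,γ₃]=(0,0,0,0,1/r), and γ₃^r·[γ₁,γ₂]⁻¹=(0,0,0,(u−1)/2,(v−1)/2). -/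
/-- Group commutator `[x,y] = x·y·x⁻¹·y⁻¹` for the BCH product. -/
noncomputable def bchComm (x y : Fin 5 → ℝ) : Fin 5 → ℝ :=
  bch (bch (bch x y) (-x)) (-y)

lemma bchPow_central (a b c : ℝ) (n : ℕ) :
    bchPow ![0, 0, a, b, c] n = ![0, 0, n * a, n * b, n * c] := by
  induction n with
  | zero => funext i; fin_cases i <;> simp [bchPow]
  | succ n ih =>
    rw [bchPow, ih]
    funext i; fin_cases i <;> simp [bch] <;> ring

/-- Commutator relations among the generators `γ₁, γ₂, γ₃` of the lattice. -/
theorem generator_commutators (r : ℕ) (hr : 1 ≤ r) (u v : ℚ) :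
    bchComm ![1, 0, 0, 0, 0] ![0, 1, 0, 0, 0] = ![0, 0, 1, 1/2, 1/2] ∧
    bchComm ![1, 0, 0, 0, 0] ![0, 0, 1, 1/2, 1/2] = ![0, 0, 0, 1, 0] ∧
    bchComm ![0, 1, 0, 0, 0] ![0, 0, 1, 1/2, 1/2] = ![0, 0, 0, 0, 1] ∧
    bchComm ![1, 0, 0, 0, 0] ![0, 0, 1 / (r : ℝ), (u : ℝ) / (2 * r), (v : ℝ) / (2 * r)] =
      ![0, 0, 0, 1 / (r : ℝ), 0] ∧
    bchComm ![0, 1, 0, 0, 0] ![0, 0, 1 / (r : ℝ), (u : ℝ) / (2 * r), (v : ℝ) / (2 * r)] =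
      ![0, 0, 0, 0, 1 / (r : ℝ)] ∧
    bch (bchPow ![0, 0, 1 / (r : ℝ), (u : ℝ) / (2 * r), (v : ℝ) / (2 * r)] r)
        (-![0, 0, 1, 1/2, 1/2]) =
      ![0, 0, 0, ((u : ℝ) - 1) / 2, ((v : ℝ) - 1) / 2] := by
  have hr0 : (r : ℝ) ≠ 0 := by positivity
  refine ⟨?_, ?_, ?_, ?_, ?_, ?_⟩ <;>
    [skip; skip; skip; skip; skip;
      rw [bchPow_central, show (r : ℝ) * (1 / r) = 1 by field_simp,
        show (r : ℝ) * ((u : ℝ) / (2 * r)) = u / 2 by field_simp,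
        show (r : ℝ) * ((v : ℝ) / (2 * r)) = v / 2 by field_simp]] <;>
    funext i <;> fin_cases i <;>
    simp [bchComm, bch] <;> ring
end

section
/- Let Γ be the lattice above with r=1, u=v=1, e=f=g=h=0 (so Γ'' = ℤ²). Then the commutator subgroup [Γ,Γ] equals {x ∈ ℝ^5 : x₁=x₂=0, x₃ ∈ ℤ, x₄−x₃/2 ∈ ℤ, x₅−x₃/2 ∈ ℤ}. -/
/-- The lattice `Γ` generated by `γ₁ = (1,0,0,0,0)` and `γ₂ = (0,1,0,0,0)`
(the case `r = 1`, `u = v = 1`, `e = f = g = h = 0`). -/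
noncomputable def Gamma0 : Subgroup G5 :=
  Subgroup.closure {G5.mk ![1, 0, 0, 0, 0], G5.mk ![0, 1, 0, 0, 0]}

open scoped commutatorElement

lemma mul_val (x y : G5) : (x * y).val = bch x.val y.val := rfl
lemma inv_val (x : G5) : (x⁻¹).val = -x.val := rfl
lemma one_val : (1 : G5).val = 0 := rfl
lemma G5ext {x y : G5} (h : x.val = y.val) : x = y := by cases x; cases y; simpa using h

/-- the target subgroup -/
noncomputable def Hgp : Subgroup G5 where
  carrier := {x : G5 | x.val 0 = 0 ∧ x.val 1 = 0 ∧ (∃ n : ℤ, x.val 2 = n) ∧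
        (∃ n : ℤ, x.val 3 - x.val 2 / 2 = n) ∧ (∃ n : ℤ, x.val 4 - x.val 2 / 2 = n)}
  one_mem' := ⟨rfl, rfl, ⟨0, by simp [one_val]⟩, ⟨0, by simp [one_val]⟩, ⟨0, by simp [one_val]⟩⟩
  mul_mem' := by
    rintro x y ⟨hx0, hx1, ⟨n, hn⟩, ⟨m, hm⟩, ⟨k, hk⟩⟩ ⟨hy0, hy1, ⟨n', hn'⟩, ⟨m', hm'⟩, ⟨k', hk'⟩⟩
    refine ⟨?_, ?_, ⟨n + n', ?_⟩, ⟨m + m', ?_⟩, ⟨k + k', ?_⟩⟩ <;>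
      simp only [Set.mem_setOf_eq, mul_val, bch, Matrix.cons_val_zero, Matrix.cons_val_one,
        Matrix.head_cons, Matrix.cons_val_two, Matrix.tail_cons, Matrix.cons_val_three,
        Matrix.cons_val_four, hx0, hx1, hy0, hy1] <;>
      push_cast <;> linarith
  inv_mem' := by
    rintro x ⟨hx0, hx1, ⟨n, hn⟩, ⟨m, hm⟩, ⟨k, hk⟩⟩
    refine ⟨?_, ?_, ⟨-n, ?_⟩, ⟨-m, ?_⟩, ⟨-k, ?_⟩⟩ <;>
      simp only [Set.mem_setOf_eq, inv_val, Pi.neg_apply, hx0, hx1] <;> push_cast <;> linarith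

/-- overgroup of Γ with integrality conditions -/
noncomputable def Lgp : Subgroup G5 where
  carrier := {x : G5 | (∃ n : ℤ, x.val 0 = n) ∧ (∃ n : ℤ, x.val 1 = n) ∧
      (∃ n : ℤ, x.val 2 - x.val 0 * x.val 1 / 2 = n)}
  one_mem' := ⟨⟨0, by simp [one_val]⟩, ⟨0, by simp [one_val]⟩, ⟨0, by simp [one_val]⟩⟩
  mul_mem' := by
    rintro x y ⟨⟨i, hi⟩, ⟨j, hj⟩, ⟨m, hm⟩⟩ ⟨⟨i', hi'⟩, ⟨j', hj'⟩, ⟨m', hm'⟩⟩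
    refine ⟨⟨i + i', ?_⟩, ⟨j + j', ?_⟩, ⟨m + m' - j * i', ?_⟩⟩ <;>
      simp only [Set.mem_setOf_eq, mul_val, bch, Matrix.cons_val_zero, Matrix.cons_val_one,
        Matrix.head_cons, Matrix.cons_val_two, Matrix.tail_cons] <;>
      push_cast <;>
      [linarith; linarith; linear_combination hm + hm' - y.val 0 * hj - (j : ℝ) * hi']
  inv_mem' := by
    rintro x ⟨⟨i, hi⟩, ⟨j, hj⟩, ⟨m, hm⟩⟩
    refine ⟨⟨-i, ?_⟩, ⟨-j, ?_⟩, ⟨-m - i * j, ?_⟩⟩ <;>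
      simp only [Set.mem_setOf_eq, inv_val, Pi.neg_apply] <;> push_cast <;>
      [linarith; linarith; linear_combination -hm - x.val 1 * hi - (i : ℝ) * hj]

lemma gamma_le_L : Gamma0 ≤ Lgp := by
  rw [Gamma0, Subgroup.closure_le]
  rintro x (rfl | rfl)
  · exact ⟨⟨1, by norm_num⟩, ⟨0, by norm_num⟩, ⟨0, by norm_num; rfl⟩⟩
  · exact ⟨⟨0, by norm_num⟩, ⟨1, by norm_num⟩, ⟨0, by norm_num; rfl⟩⟩

lemma comm_val (g h : G5) :
    (⁅g, h⁆).val = bch (bch (bch g.val h.val) (-g.val)) (-h.val) := rfl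

lemma comm_mem_H {g h : G5} (hg : g ∈ Lgp) (hh : h ∈ Lgp) : ⁅g, h⁆ ∈ Hgp := by
  obtain ⟨⟨i, hi⟩, ⟨j, hj⟩, ⟨m, hm⟩⟩ := hg
  obtain ⟨⟨i', hi'⟩, ⟨j', hj'⟩, ⟨m', hm'⟩⟩ := hh
  obtain ⟨d1, hd1⟩ : ∃ d : ℤ, (i' - 1) * i' = d + d := by
    have := Int.even_mul_succ_self (i' - 1); simpa [Even] using this
  obtain ⟨d2, hd2⟩ : ∃ d : ℤ, (i - 1) * i = d + d := by
    have := Int.even_mul_succ_self (i - 1); simpa [Even] using this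
  obtain ⟨d3, hd3⟩ : ∃ d : ℤ, (j - 1) * j = d + d := by
    have := Int.even_mul_succ_self (j - 1); simpa [Even] using this
  obtain ⟨d4, hd4⟩ : ∃ d : ℤ, (j' - 1) * j' = d + d := by
    have := Int.even_mul_succ_self (j' - 1); simpa [Even] using this
  have hd1R : ((i' : ℝ) - 1) * i' = d1 + d1 := by exact_mod_cast hd1
  have hd2R : ((i : ℝ) - 1) * i = d2 + d2 := by exact_mod_cast hd2
  have hd3R : ((j : ℝ) - 1) * j = d3 + d3 := by exact_mod_cast hd3
  have hd4R : ((j' : ℝ) - 1) * j' = d4 + d4 := by exact_mod_cast hd4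
  have hm2 : g.val 2 = (m : ℝ) + (i : ℝ) * (j : ℝ) / 2 := by
    rw [hi, hj] at hm; linarith
  have hm2' : h.val 2 = (m' : ℝ) + (i' : ℝ) * (j' : ℝ) / 2 := by
    rw [hi', hj'] at hm'; linarith
  refine ⟨?_, ?_, ⟨i * j' - j * i', ?_⟩, ⟨-m * i' + i * m' + i * i' * j' - i * j * i' - j * d1 + j' * d2, ?_⟩,
      ⟨-m * j' + j * m' - i' * d3 + i * d4, ?_⟩⟩ <;>
    simp only [Set.mem_setOf_eq, comm_val, bch, Matrix.cons_val_zero, Matrix.cons_val_one,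
      Matrix.head_cons, Matrix.cons_val_two, Matrix.tail_cons, Matrix.cons_val_three,
      Matrix.cons_val_four, Pi.neg_apply, hi, hj, hi', hj', hm2, hm2'] <;>
    push_cast
  · ring
  · ring
  · ring
  · linear_combination (-(j : ℝ) / 2) * hd1R + ((j' : ℝ) / 2) * hd2R
  · linear_combination (-(i' : ℝ) / 2) * hd3R + ((i : ℝ) / 2) * hd4R

lemma N_mul (r s t r' s' t' : ℝ) :
    G5.mk ![0,0,r,s,t] * G5.mk ![0,0,r',s',t'] = G5.mk ![0,0,r+r',s+s',t+t'] :=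
  congrArg G5.mk (by funext i; fin_cases i <;> simp [bch])

lemma N_inv (r s t : ℝ) : (G5.mk ![0,0,r,s,t])⁻¹ = G5.mk ![0,0,-r,-s,-t] :=
  congrArg G5.mk (by funext i; fin_cases i <;> simp)

lemma N_one : (1 : G5) = G5.mk ![0,0,0,0,0] :=
  congrArg G5.mk (by funext i; fin_cases i <;> simp)

lemma N_zpow (r s t : ℝ) (n : ℤ) :
    (G5.mk ![0,0,r,s,t]) ^ n = G5.mk ![0,0,n*r,n*s,n*t] := by
  induction n using Int.induction_on with
  | zero => rw [zpow_zero, N_one]; exact congrArg G5.mk (by funext i; fin_cases i <;> norm_num)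
  | succ k ih =>
    rw [zpow_add_one, ih, N_mul]
    exact congrArg G5.mk (by funext i; fin_cases i <;> push_cast <;> ring)
  | pred k ih =>
    rw [zpow_sub_one, ih, N_inv, N_mul]
    exact congrArg G5.mk (by funext i; fin_cases i <;> push_cast <;> ring)

lemma c_eq : ⁅G5.mk ![1,0,0,0,0], G5.mk ![0,1,0,0,0]⁆ = G5.mk ![0,0,1,1/2,1/2] :=
  G5ext (by rw [comm_val]; funext i; fin_cases i <;> norm_num [bch, Matrix.cons_val_two, Matrix.cons_val_three,
    Matrix.cons_val_four, Matrix.tail_cons, Matrix.head_cons])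

lemma p_eq : ⁅G5.mk ![1,0,0,0,0], G5.mk ![0,0,1,1/2,1/2]⁆ = G5.mk ![0,0,0,1,0] :=
  G5ext (by rw [comm_val]; funext i; fin_cases i <;> norm_num [bch, Matrix.cons_val_two, Matrix.cons_val_three,
    Matrix.cons_val_four, Matrix.tail_cons, Matrix.head_cons])

lemma q_eq : ⁅G5.mk ![0,1,0,0,0], G5.mk ![0,0,1,1/2,1/2]⁆ = G5.mk ![0,0,0,0,1] :=
  G5ext (by rw [comm_val]; funext i; fin_cases i <;> norm_num [bch, Matrix.cons_val_two, Matrix.cons_val_three,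
    Matrix.cons_val_four, Matrix.tail_cons, Matrix.head_cons])

lemma ha_mem : G5.mk ![1,0,0,0,0] ∈ Gamma0 := Subgroup.subset_closure (by left; rfl)
lemma hb_mem : G5.mk ![0,1,0,0,0] ∈ Gamma0 := Subgroup.subset_closure (by right; rfl)

lemma hc_mem : G5.mk ![0,0,1,1/2,1/2] ∈ ⁅Gamma0, Gamma0⁆ :=
  c_eq ▸ Subgroup.commutator_mem_commutator ha_mem hb_mem

lemma hc_mem' : G5.mk ![0,0,1,1/2,1/2] ∈ Gamma0 := by
  have : ⁅Gamma0, Gamma0⁆ ≤ Gamma0 :=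
    Subgroup.commutator_le.2 fun g hg h hh =>
      mul_mem (mul_mem (mul_mem hg hh) (inv_mem hg)) (inv_mem hh)
  exact this hc_mem

lemma hp_mem : G5.mk ![0,0,0,1,0] ∈ ⁅Gamma0, Gamma0⁆ :=
  p_eq ▸ Subgroup.commutator_mem_commutator ha_mem hc_mem'

lemma hq_mem : G5.mk ![0,0,0,0,1] ∈ ⁅Gamma0, Gamma0⁆ :=
  q_eq ▸ Subgroup.commutator_mem_commutator hb_mem hc_mem'

lemma H_le : Hgp ≤ ⁅Gamma0, Gamma0⁆ := by
  rintro x ⟨h0, h1, ⟨n, hn⟩, ⟨m, hm⟩, ⟨k, hk⟩⟩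
  have hx : x = G5.mk ![0, 0, (n : ℝ), n/2 + m, n/2 + k] := by
    apply G5ext; funext i; fin_cases i
    · exact h0
    · exact h1
    · exact hn
    · show x.val 3 = _; rw [hn] at hm; simp; linarith
    · show x.val 4 = _; rw [hn] at hk; simp; linarith
  have hprod : G5.mk ![0, 0, (n : ℝ), n/2 + m, n/2 + k] =
      (G5.mk ![0,0,1,1/2,1/2]) ^ n * (G5.mk ![0,0,0,1,0]) ^ m * (G5.mk ![0,0,0,0,1]) ^ k := by
    rw [N_zpow, N_zpow, N_zpow, N_mul, N_mul]
    exact congrArg G5.mk (by funext i; fin_cases i <;> push_cast <;> ring)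
  rw [hx, hprod]
  exact mul_mem (mul_mem (Subgroup.zpow_mem _ hc_mem n) (Subgroup.zpow_mem _ hp_mem m))
    (Subgroup.zpow_mem _ hq_mem k)

/-- The commutator subgroup `[Γ,Γ]` equals
`{x : x₁ = x₂ = 0, x₃ ∈ ℤ, x₄ − x₃/2 ∈ ℤ, x₅ − x₃/2 ∈ ℤ}`. -/
theorem commutator_subgroup_Gamma0 :
    ((⁅Gamma0, Gamma0⁆ : Subgroup G5) : Set G5) =
      {x : G5 | x.val 0 = 0 ∧ x.val 1 = 0 ∧ (∃ n : ℤ, x.val 2 = n) ∧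
        (∃ n : ℤ, x.val 3 - x.val 2 / 2 = n) ∧ (∃ n : ℤ, x.val 4 - x.val 2 / 2 = n)} := by
  have h : ⁅Gamma0, Gamma0⁆ = Hgp :=
    le_antisymm
      (Subgroup.commutator_le.2 fun g hg h hh => comm_mem_H (gamma_le_L hg) (gamma_le_L hh))
      H_le
  rw [h]; rfl
end
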